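/- Let n ≥ 5 with n ≡ 2 (mod 3) (so that f_{n+1}, f_{n−2} and f_{n+4} are even and f_n + f_{n+2} is even). Then the following three identities hold: (1) (f_{n+4}/2)·f_n² = (f_{n+1}/2)·f_{n+1}² + (f_{n−2}/2)·f_{n+2}²; (2) f_{n+2}·f_{n+1}² = f_{n+2}·f_n² + f_{n−1}·f_{n+2}²; (3) (f_{n+1}/2)·f_{n+2}² = (f_{n+1}/2)·f_n² + ((f_n + f_{n+2})/2)·f_{n+1}². -/

import Mathlib

/-!
Each identity, with the halves cleared, is a polynomial identity in two consecutive Fibonacci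
numbers, so it holds for every index. The halving is legitimate because `f_k` is even whenever
`3 ∣ k` (as `f_3 = 2` divides it), and `f_n + f_{n+2} = 2 f_n + f_{n+1}`.
-/

open Nat

theorem two_dvd_fib_of_three_dvd {k : ℕ} (hk : 3 ∣ k) : 2 ∣ fib k :=
  fib_dvd 3 k hk

theorem fib_add_two_sq_eq_fib_add_one_sq_add (k : ℕ) :
    fib (k + 2) ^ 2 = fib (k + 1) ^ 2 + fib k * fib (k + 3) := by
  simp only [fib_add_two]
  ring

theorem fib_add_two_sq_eq_fib_sq_add (k : ℕ) :
    fib (k + 2) ^ 2 = fib k ^ 2 + (fib k + fib (k + 2)) * fib (k + 1) := by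
  simp only [fib_add_two]
  ring

theorem fib_add_six_mul_fib_add_two_sq (m : ℕ) :
    fib (m + 6) * fib (m + 2) ^ 2 = fib (m + 3) ^ 3 + fib m * fib (m + 4) ^ 2 := by
  simp only [fib_add_two]
  ring

theorem div_two_mul_eq_div_two_mul_add_div_two_mul {a b c x y z : ℕ} (ha : 2 ∣ a) (hb : 2 ∣ b)
    (hc : 2 ∣ c) (h : a * x = b * y + c * z) : a / 2 * x = b / 2 * y + c / 2 * z := by
  obtain ⟨a, rfl⟩ := ha
  obtain ⟨b, rfl⟩ := hb
  obtain ⟨c, rfl⟩ := hc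
  simp only [Nat.mul_div_cancel_left _ two_pos]
  linarith

theorem fib_sq_identities_of_mod_three_eq_two_general (n : ℕ) (h3 : n % 3 = 2) :
    (fib (n + 4) / 2) * fib n ^ 2 =
      (fib (n + 1) / 2) * fib (n + 1) ^ 2 + (fib (n - 2) / 2) * fib (n + 2) ^ 2 ∧
    fib (n + 2) * fib (n + 1) ^ 2 = fib (n + 2) * fib n ^ 2 + fib (n - 1) * fib (n + 2) ^ 2 ∧
    (fib (n + 1) / 2) * fib (n + 2) ^ 2 =
      (fib (n + 1) / 2) * fib n ^ 2 + ((fib n + fib (n + 2)) / 2) * fib (n + 1) ^ 2 := by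
  obtain ⟨m, rfl⟩ : ∃ m, n = m + 2 := ⟨n - 2, by omega⟩
  have even_m : 2 ∣ fib m := two_dvd_fib_of_three_dvd (by omega)
  have even_m3 : 2 ∣ fib (m + 3) := two_dvd_fib_of_three_dvd (by omega)
  have even_m6 : 2 ∣ fib (m + 6) := two_dvd_fib_of_three_dvd (by omega)
  have even_sum : 2 ∣ fib (m + 2) + fib (m + 4) := by
    rw [show fib (m + 4) = fib (m + 2) + fib (m + 3) from fib_add_two]
    omega
  simp only [Nat.add_sub_cancel, show m + 2 - 1 = m + 1 by omega, Nat.add_assoc]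
  refine ⟨?_, ?_, ?_⟩
  · refine div_two_mul_eq_div_two_mul_add_div_two_mul even_m6 even_m3 even_m ?_
    rw [fib_add_six_mul_fib_add_two_sq]
    ring
  · rw [fib_add_two_sq_eq_fib_add_one_sq_add (m + 1)]
    ring
  · refine div_two_mul_eq_div_two_mul_add_div_two_mul even_m3 even_m3 even_sum ?_
    rw [fib_add_two_sq_eq_fib_sq_add (m + 2)]
    ring

theorem fib_sq_identities_of_mod_three_eq_two (n : ℕ) (hn : 5 ≤ n) (h3 : n % 3 = 2) :
    (fib (n + 4) / 2) * fib n ^ 2 =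
      (fib (n + 1) / 2) * fib (n + 1) ^ 2 + (fib (n - 2) / 2) * fib (n + 2) ^ 2 ∧
    fib (n + 2) * fib (n + 1) ^ 2 = fib (n + 2) * fib n ^ 2 + fib (n - 1) * fib (n + 2) ^ 2 ∧
    (fib (n + 1) / 2) * fib (n + 2) ^ 2 =
      (fib (n + 1) / 2) * fib n ^ 2 + ((fib n + fib (n + 2)) / 2) * fib (n + 1) ^ 2 :=
  fib_sq_identities_of_mod_three_eq_two_general n h3
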